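/- Assume the primitive divisor hypothesis. Then for all integers k, n ≥ 1: gcd(k, n) = 1 if and only if S_k ∩ S_n = ∅. -/

import Mathlib

open IsDedekindDomain IsDedekindDomain.HeightOneSpectrum NumberField WeierstrassCurve Filter

open scoped Classical in
/-- The normalized additive valuation of `K` at the prime `q` (with `ordAt q 0 = 0`). -/
noncomputable def ordAt {K : Type*} [Field K] [NumberField K]
    (q : HeightOneSpectrum (𝓞 K)) (z : K) : ℤ :=
  if hz : z = 0 then 0
  else -Multiplicative.toAdd (WithZero.unzero ((q.valuation K).ne_zero_iff.mpr hz))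

/-!
Over any field with a valuation `v` for which the short Weierstrass equation `y² = x³ + ax + b`
is integral, the points with `v x > 1`, together with `O`, form a subgroup `E₁` (the kernel of
reduction). Indeed, if `P₁ + P₂ + P₃ = O` lie on the line `y = ℓx + ν`, then Vieta's formulas
`x₁ + x₂ + x₃ = ℓ²`, `x₁x₂ + x₃(x₁ + x₂) = a - 2ℓν`, `x₁x₂x₃ = ν² - b` show that `v x₃ ≤ 1` is
incompatible with `v x₁, v x₂ > 1`: the term `x₁x₂` would strictly dominate all the others.

Hence for each prime `q` the `m` with `m • P ∈ E₁(K_q)` form a subgroup of `ℤ`. If `q ∈ S_k ∩ S_n`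
this subgroup contains `gcd(k, n)`, and it does not contain `1` when `q ∉ S_bad`; conversely a
common prime factor `ℓ` of `k` and `n` yields, via a primitive divisor `q ∈ S_ℓ`, a prime in
`S_k ∩ S_n`.
-/

namespace Valuation

variable {F Γ₀ : Type*} [Field F] [LinearOrderedCommGroupWithZero Γ₀] (v : Valuation F Γ₀)

theorem map_two_le_one : v 2 ≤ 1 := by
  simpa [one_add_one_eq_two] using v.map_add_le v.map_one.le v.map_one.le

theorem one_lt_of_vieta {a b x₁ x₂ x₃ ℓ ν : F} (ha : v a ≤ 1) (hb : v b ≤ 1)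
    (hsum : x₁ + x₂ + x₃ = ℓ ^ 2) (hpair : x₁ * x₂ + x₃ * (x₁ + x₂) = a - 2 * ℓ * ν)
    (hprod : x₁ * x₂ * x₃ = ν ^ 2 - b) (hx₁ : 1 < v x₁) (hx₂ : 1 < v x₂) : 1 < v x₃ := by
  by_contra! hx₃
  set p := v x₁ * v x₂ with hp
  have hp1 : 1 < p := one_lt_mul'' hx₁ hx₂
  have hx₁p : v x₁ < p := lt_mul_of_one_lt_right (zero_lt_one.trans hx₁) hx₂
  have hx₂p : v x₂ < p := lt_mul_of_one_lt_left (zero_lt_one.trans hx₂) hx₁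
  have hx₁₂ : v (x₁ + x₂) < p := v.map_add_lt hx₁p hx₂p
  have hℓ : v ℓ ^ 2 < p := by
    rw [← map_pow, ← hsum]
    exact v.map_add_lt hx₁₂ (hx₃.trans_lt hp1)
  have hν : v ν ^ 2 ≤ p := by
    rw [← map_pow, show ν ^ 2 = x₁ * x₂ * x₃ + b by rw [hprod]; ring]
    refine v.map_add_le ?_ (hb.trans hp1.le)
    simpa [hp] using mul_le_of_le_one_right' hx₃ (a := p)
  have hℓν : v (2 * ℓ * ν) < p := by
    refine lt_of_le_of_lt (b := v ℓ * v ν) ?_ ?_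
    · rw [map_mul, map_mul]
      exact mul_le_mul_left (mul_le_of_le_one_left' v.map_two_le_one) _
    · rw [← pow_lt_pow_iff_left₀ zero_le zero_le two_ne_zero, mul_pow, sq p]
      exact mul_lt_mul_of_lt_of_le_of_nonneg_of_pos hℓ hν zero_le (zero_lt_one.trans hp1)
  have hx₃₁₂ : v (x₃ * (x₁ + x₂)) < p := by
    rw [map_mul]
    exact (mul_le_of_le_one_left' hx₃).trans_lt hx₁₂
  have : v (x₁ * x₂) < p := by
    rw [show x₁ * x₂ = a - 2 * ℓ * ν - x₃ * (x₁ + x₂) by rw [← hpair]; ring]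
    exact v.map_sub_lt (v.map_sub_lt (ha.trans_lt hp1) hℓν) hx₃₁₂
  exact this.ne (map_mul v x₁ x₂)

end Valuation

namespace WeierstrassCurve.Affine

variable {F Γ₀ : Type*} [Field F] [DecidableEq F] [LinearOrderedCommGroupWithZero Γ₀]
  {W : Affine F} [W.IsShortNF] (v : Valuation F Γ₀)

theorem one_lt_valuation_addX (ha₄ : v W.a₄ ≤ 1) (ha₆ : v W.a₆ ≤ 1) {x₁ x₂ y₁ y₂ : F}
    (h₁ : W.Equation x₁ y₁) (h₂ : W.Equation x₂ y₂) (hxy : ¬(x₁ = x₂ ∧ y₁ = W.negY x₂ y₂))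
    (hx₁ : 1 < v x₁) (hx₂ : 1 < v x₂) : 1 < v (W.addX x₁ x₂ (W.slope x₁ x₂ y₁ y₂)) := by
  have h := W.addPolynomial_slope h₁ h₂ hxy
  rw [addPolynomial_eq, neg_inj, Cubic.prod_X_sub_C_eq, Cubic.toPoly_injective] at h
  simp only [Cubic.mk.injEq, IsShortNF.a₁, IsShortNF.a₃] at h
  obtain ⟨-, -, hpair, hprod⟩ := h
  set ℓ := W.slope x₁ x₂ y₁ y₂
  refine v.one_lt_of_vieta (ℓ := ℓ) (ν := y₁ - ℓ * x₁) ha₄ ha₆ ?_ ?_ ?_ hx₁ hx₂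
  · simp only [addX, IsShortNF.a₁, IsShortNF.a₂]
    ring
  · linear_combination -hpair
  · linear_combination hprod

def reductionKernel (ha₄ : v W.a₄ ≤ 1) (ha₆ : v W.a₆ ≤ 1) : AddSubgroup W.Point where
  carrier := {P | match P with
    | 0 => True
    | .some x _ _ => 1 < v x}
  zero_mem' := trivial
  add_mem' := by
    rintro (_ | ⟨x₁, y₁, h₁⟩) (_ | ⟨x₂, y₂, h₂⟩) hP₁ hP₂
    · exact trivial
    · exact hP₂
    · exact hP₁
    by_cases hxy : x₁ = x₂ ∧ y₁ = W.negY x₂ y₂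
    · rw [Point.add_of_Y_eq hxy.1 hxy.2]
      exact trivial
    · rw [Point.add_some hxy]
      exact one_lt_valuation_addX v ha₄ ha₆ h₁.1 h₂.1 hxy hP₁ hP₂
  neg_mem' := by
    rintro (_ | ⟨x, y, h⟩) hP
    · exact trivial
    · rw [Point.neg_some]
      exact hP

theorem some_mem_reductionKernel_iff {ha₄ : v W.a₄ ≤ 1} {ha₆ : v W.a₆ ≤ 1} {x y : F}
    (h : W.Nonsingular x y) : Point.some x y h ∈ reductionKernel v ha₄ ha₆ ↔ 1 < v x :=
  Iff.rfl

end WeierstrassCurve.Affine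

namespace Int

open AddSubgroup in
theorem gcd_eq_one_iff_inter_eq_empty {ι : Type*} (H : ι → AddSubgroup ℤ) (B : Set ι)
    (S : ℤ → Set ι) (hS : ∀ m, m ≠ 0 → ∀ q, q ∈ S m ↔ q ∉ B ∧ m ∈ H q)
    (hB : ∀ q, (1 : ℤ) ∈ H q → q ∈ B) (hprime : ∀ ℓ : ℕ, ℓ.Prime → (S ℓ).Nonempty)
    {k n : ℤ} (hk : k ≠ 0) (hn : n ≠ 0) : k.gcd n = 1 ↔ S k ∩ S n = ∅ := by
  constructor
  · intro hgcd
    refine Set.eq_empty_of_forall_notMem fun q ⟨hqk, hqn⟩ => ?_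
    obtain ⟨hqB, hkq⟩ := (hS k hk q).1 hqk
    obtain ⟨-, hnq⟩ := (hS n hn q).1 hqn
    have hle : zmultiples (k.gcd n : ℤ) ≤ H q :=
      zmultiples_sup k n ▸ sup_le (zmultiples_le_of_mem hkq) (zmultiples_le_of_mem hnq)
    exact hqB (hB q (by simpa [hgcd] using hle (mem_zmultiples _)))
  · intro hempty
    by_contra hgcd
    set ℓ := (k.gcd n).minFac
    have hℓ : ℓ.Prime := Nat.minFac_prime hgcd
    obtain ⟨q, hq⟩ := hprime ℓ hℓ
    obtain ⟨hqB, hℓq⟩ := (hS ℓ (by exact_mod_cast hℓ.ne_zero) q).1 hq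
    have hmem {m : ℤ} (hm : m ≠ 0) (hℓm : (k.gcd n : ℤ) ∣ m) : q ∈ S m :=
      (hS m hm q).2 ⟨hqB, zmultiples_le_of_mem hℓq <|
        mem_zmultiples_iff.2 <| (natCast_dvd_natCast.2 (Nat.minFac_dvd _)).trans hℓm⟩
    have hqkn : q ∈ S k ∩ S n := ⟨hmem hk (gcd_dvd_left k n), hmem hn (gcd_dvd_right k n)⟩
    simp [hempty] at hqkn

end Int

theorem ordAt_lt_zero_iff {K : Type*} [Field K] [NumberField K] (q : HeightOneSpectrum (𝓞 K))
    (z : K) : ordAt q z < 0 ↔ 1 < q.valuation K z := by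
  rcases eq_or_ne z 0 with rfl | hz
  · simp [ordAt]
  have hv : q.valuation K z ≠ 0 := (Valuation.ne_zero_iff _).2 hz
  have : ordAt q z = -WithZero.log (q.valuation K z) := by
    rw [ordAt, dif_neg hz]
    congr 1
    conv_rhs => rw [← WithZero.coe_unzero ((q.valuation K).ne_zero_iff.mpr hz)]
    rfl
  rw [this, neg_neg_iff_pos, WithZero.lt_log_iff_exp_lt hv, WithZero.exp_zero]

open scoped Classical in
theorem stmt_8
    (K : Type) [Field K] [NumberField K]
    (a b : 𝓞 K)
    (W : WeierstrassCurve.Affine K)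
    (hW : W = { a₁ := 0, a₂ := 0, a₃ := 0, a₄ := algebraMap (𝓞 K) K a,
                a₆ := algebraMap (𝓞 K) K b })
    (P : W.Point) (hP : ¬ IsOfFinAddOrder P)
    (x y : ℤ → K)
    (hxy : ∀ n : ℤ, n ≠ 0 → ∃ h : W.Nonsingular (x n) (y n),
      n • P = WeierstrassCurve.Affine.Point.some _ _ h)
    (Sbad : Set (HeightOneSpectrum (𝓞 K)))
    (hSbadFin : Sbad.Finite)
    (hSbadRam : ∀ q : HeightOneSpectrum (𝓞 K),
      (∃ p : ℕ, p.Prime ∧ q.asIdeal ^ 2 ∣ Ideal.span {(p : 𝓞 K)}) → q ∈ Sbad)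
    (hSbad2 : ∀ q : HeightOneSpectrum (𝓞 K), (2 : 𝓞 K) ∈ q.asIdeal → q ∈ Sbad)
    (hSbadSing : ∀ q : HeightOneSpectrum (𝓞 K),
      (-16 * (4 * a ^ 3 + 27 * b ^ 2) : 𝓞 K) ∈ q.asIdeal → q ∈ Sbad)
    (hSbadP : ∀ q : HeightOneSpectrum (𝓞 K),
      (ordAt q (x 1) < 0 ∨ ordAt q (y 1) < 0) → q ∈ Sbad)
    (S : ℤ → Set (HeightOneSpectrum (𝓞 K)))
    (hS : ∀ n : ℤ, n ≠ 0 →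
      S n = {q : HeightOneSpectrum (𝓞 K) | q ∉ Sbad ∧ ordAt q (x n) < 0})
    (hPrim : ∀ ℓ : ℕ, ℓ.Prime → ∀ j : ℕ, 1 ≤ j →
      ((S ((ℓ : ℤ) ^ j)) \ (S ((ℓ : ℤ) ^ (j - 1)))).Nonempty)
    :
    ∀ k n : ℤ, 1 ≤ k → 1 ≤ n → (Int.gcd k n = 1 ↔ S k ∩ S n = ∅) := by
  intro k n hk hn
  haveI : W.IsShortNF := by subst hW; exact ⟨rfl, rfl, rfl⟩
  have ha₄ (q : HeightOneSpectrum (𝓞 K)) : q.valuation K W.a₄ ≤ 1 := by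
    subst hW; exact q.valuation_le_one a
  have ha₆ (q : HeightOneSpectrum (𝓞 K)) : q.valuation K W.a₆ ≤ 1 := by
    subst hW; exact q.valuation_le_one b
  let H q := (Affine.reductionKernel (q.valuation K) (ha₄ q) (ha₆ q)).comap (zmultiplesHom _ P)
  have hH (m : ℤ) (hm : m ≠ 0) (q) : m ∈ H q ↔ ordAt q (x m) < 0 := by
    obtain ⟨h, hmP⟩ := hxy m hm
    rw [AddSubgroup.mem_comap, zmultiplesHom_apply, hmP, ordAt_lt_zero_iff]
    exact Affine.some_mem_reductionKernel_iff _ h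
  refine Int.gcd_eq_one_iff_inter_eq_empty H Sbad S (fun m hm q => ?_)
    (fun q h1 => hSbadP q (.inl ((hH 1 one_ne_zero q).1 h1)))
    (fun ℓ hℓ => by simpa using (hPrim ℓ hℓ 1 le_rfl).mono Set.sdiff_subset) (by omega) (by omega)
  rw [hS m hm, hH m hm, Set.mem_setOf_eq]
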